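/- The sequence L_n satisfies the second-order recurrence L_n = 2n·L_{n−1} − n(n−1)·L_{n−2} + 2·(n−1)! for all n ≥ 2, with initial values L_0 = L_1 = 0. -/

import Mathlib

open Finset

/-- The first unoccupied spot numbered greater than or equal to `p`, if any. -/
def nextSpot {n : ℕ} (occ : Finset (Fin n)) (p : Fin n) : Option (Fin n) :=
  if h : (Finset.univ.filter (fun s : Fin n => p ≤ s ∧ s ∉ occ)).Nonempty then
    some ((Finset.univ.filter (fun s : Fin n => p ≤ s ∧ s ∉ occ)).min' h)
  else none

/-- The set of occupied spots after the first `k` cars have tried to park,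
given the preference list `α`. -/
def occupiedAfter {n : ℕ} (α : Fin n → Fin n) : ℕ → Finset (Fin n)
  | 0 => ∅
  | k + 1 =>
    if h : k < n then
      match nextSpot (occupiedAfter α k) (α ⟨k, h⟩) with
      | some s => insert s (occupiedAfter α k)
      | none => occupiedAfter α k
    else occupiedAfter α k

/-- The spot in which car `i` parks (cars numbered `0,…,n-1` enter in order),
or `none` if car `i` is unable to park. -/
def carSpot {n : ℕ} (α : Fin n → Fin n) (i : Fin n) : Option (Fin n) :=
  nextSpot (occupiedAfter α i.val) (α i)

/-- The number of lucky cars: cars parking exactly in their preferred spot. -/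
def luckyCount {n : ℕ} (α : Fin n → Fin n) : ℕ :=
  (Finset.univ.filter (fun i : Fin n => carSpot α i = some (α i))).card

/-- `L n` is the number of preference lists in `[n]^n` with exactly `n - 1` lucky cars. -/
def luckyL (n : ℕ) : ℕ :=
  (Finset.univ.filter
    (fun α : Fin n → Fin n => (luckyCount α : ℤ) = (n : ℤ) - 1)).card

/-- The `n`th harmonic number. -/
noncomputable def H (n : ℕ) : ℝ := ∑ i ∈ Finset.Icc 1 n, (1 : ℝ) / i

-- basic nextSpot lemmas
theorem nextSpot_eq_self {n : ℕ} {occ : Finset (Fin n)} {p : Fin n} (h : p ∉ occ) :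
    nextSpot occ p = some p := by
  have hp : p ∈ Finset.univ.filter (fun s : Fin n => p ≤ s ∧ s ∉ occ) := by
    simp [h]
  rw [nextSpot, dif_pos ⟨p, hp⟩]
  congr 1
  apply le_antisymm
  · exact Finset.min'_le _ _ hp
  · have := Finset.min'_mem (Finset.univ.filter (fun s : Fin n => p ≤ s ∧ s ∉ occ)) ⟨p, hp⟩
    simp only [Finset.mem_filter] at this
    exact this.2.1

theorem nextSpot_some {n : ℕ} {occ : Finset (Fin n)} {p s : Fin n}
    (h : nextSpot occ p = some s) :
    p ≤ s ∧ s ∉ occ ∧ ∀ q, p ≤ q → q ∉ occ → s ≤ q := by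
  rw [nextSpot] at h
  split_ifs at h with hne
  · have hs : s ∈ Finset.univ.filter (fun s : Fin n => p ≤ s ∧ s ∉ occ) := by
      cases h; exact Finset.min'_mem _ _
    simp only [Finset.mem_filter] at hs
    refine ⟨hs.2.1, hs.2.2, fun q hq hq' => ?_⟩
    cases h
    exact Finset.min'_le _ _ (by simp [hq, hq'])

theorem nextSpot_none {n : ℕ} {occ : Finset (Fin n)} {p : Fin n} :
    nextSpot occ p = none ↔ ∀ q, p ≤ q → q ∈ occ := by
  rw [nextSpot]
  split_ifs with hne
  · constructor
    · intro h; exact absurd h (by simp)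
    · intro h
      exfalso
      obtain ⟨s, hs⟩ := hne
      simp only [Finset.mem_filter] at hs
      exact hs.2.2 (h s hs.2.1)
  · refine ⟨fun _ q hq => ?_, fun _ => rfl⟩
    by_contra hq'
    exact hne ⟨q, by simp [hq, hq']⟩

theorem nextSpot_ne_of_mem {n : ℕ} {occ : Finset (Fin n)} {p : Fin n} (h : p ∈ occ) :
    nextSpot occ p ≠ some p := by
  intro hc
  exact (nextSpot_some hc).2.1 h

-- occupiedAfter lemmas
theorem occupiedAfter_succ {n : ℕ} (α : Fin n → Fin n) (i : Fin n) :
    occupiedAfter α (i.val + 1) =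
      match carSpot α i with
      | some s => insert s (occupiedAfter α i.val)
      | none => occupiedAfter α i.val := by
  rw [occupiedAfter, dif_pos i.isLt]
  rfl

theorem occupiedAfter_subset_succ {n : ℕ} (α : Fin n → Fin n) (k : ℕ) :
    occupiedAfter α k ⊆ occupiedAfter α (k + 1) := by
  rw [occupiedAfter]
  split_ifs with h
  · cases hn : nextSpot (occupiedAfter α k) (α ⟨k, h⟩) <;> simp [hn, Finset.subset_insert]
  · exact Finset.Subset.refl _

theorem occupiedAfter_mono {n : ℕ} (α : Fin n → Fin n) {k k' : ℕ} (h : k ≤ k') :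
    occupiedAfter α k ⊆ occupiedAfter α k' := by
  induction k' with
  | zero => rw [Nat.le_zero.mp h]
  | succ m ih =>
    rcases Nat.lt_or_ge k (m+1) with h' | h'
    · exact Finset.Subset.trans (ih (Nat.lt_succ_iff.mp h')) (occupiedAfter_subset_succ α m)
    · have : k = m + 1 := le_antisymm h h'
      subst this; exact Finset.Subset.refl _

theorem carSpot_mem_occupied {n : ℕ} {α : Fin n → Fin n} {i : Fin n} {s : Fin n}
    (h : carSpot α i = some s) : s ∈ occupiedAfter α (i.val + 1) := by
  rw [occupiedAfter_succ, h]
  exact Finset.mem_insert_self _ _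

theorem not_lucky_of_mem {n : ℕ} {α : Fin n → Fin n} {i : Fin n}
    (h : α i ∈ occupiedAfter α i.val) : carSpot α i ≠ some (α i) := by
  exact nextSpot_ne_of_mem h

theorem lucky_mem_later {n : ℕ} {α : Fin n → Fin n} {i i' : Fin n}
    (h : carSpot α i = some (α i)) (hlt : i < i') : α i ∈ occupiedAfter α i'.val :=
  occupiedAfter_mono α (Nat.succ_le_of_lt hlt) (carSpot_mem_occupied h)

theorem sim {n : ℕ} (α : Fin n → Fin n) (c : ℕ) (k : ℕ) (hck : c ≤ k) : k ≤ n →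
    (∀ i : Fin n, c ≤ i.val → i.val < k → α i ∉ occupiedAfter α c) →
    (∀ i i' : Fin n, c ≤ i.val → i.val < k → c ≤ i'.val → i'.val < k → α i = α i' → i = i') →
    occupiedAfter α k =
      occupiedAfter α c ∪
        (Finset.univ.filter (fun i : Fin n => c ≤ i.val ∧ i.val < k)).image α
    ∧ ∀ i : Fin n, c ≤ i.val → i.val < k → carSpot α i = some (α i) := by
  induction k, hck using Nat.le_induction with
  | base =>
    intro _ _ _
    constructor
    · have he : (Finset.univ.filter (fun i : Fin n => c ≤ i.val ∧ i.val < c)) = ∅ := by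
        apply Finset.filter_false_of_mem
        rintro i - ⟨h1, h2⟩
        exact absurd (lt_of_le_of_lt h1 h2) (lt_irrefl _)
      rw [he, Finset.image_empty, Finset.union_empty]
    · intro i h1 h2; exact absurd (lt_of_le_of_lt h1 h2) (lt_irrefl _)
  | succ k hck ih =>
    intro hkn hfree hinj
    have hk : k < n := hkn
    set ik : Fin n := ⟨k, hk⟩ with hik
    have hikv : ik.val = k := rfl
    obtain ⟨ihocc, ihlucky⟩ := ih (le_of_lt hk)
      (fun i h1 h2 => hfree i h1 (h2.trans (Nat.lt_succ_self k)))
      (fun i i' h1 h2 h3 h4 => hinj i i' h1 (h2.trans (Nat.lt_succ_self k)) h3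
        (h4.trans (Nat.lt_succ_self k)))
    have hmem : α ik ∉ occupiedAfter α k := by
      rw [ihocc]
      simp only [Finset.mem_union, Finset.mem_image, Finset.mem_filter, not_or, not_exists]
      constructor
      · exact hfree ik hck (Nat.lt_succ_self k)
      · rintro i ⟨⟨-, h1, h2⟩, h3⟩
        have := hinj i ik h1 (h2.trans (Nat.lt_succ_self k)) hck (Nat.lt_succ_self k) h3
        rw [this] at h2
        exact absurd h2 (lt_irrefl _)
    have hspot : carSpot α ik = some (α ik) := nextSpot_eq_self hmem
    constructor
    · have := occupiedAfter_succ α ik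
      rw [hikv, hspot] at this
      rw [this, ihocc]
      have hfilter : (Finset.univ.filter (fun i : Fin n => c ≤ i.val ∧ i.val < k + 1)) =
          insert ik (Finset.univ.filter (fun i : Fin n => c ≤ i.val ∧ i.val < k)) := by
        ext i
        simp only [Finset.mem_filter, Finset.mem_insert, Finset.mem_univ, true_and]
        constructor
        · rintro ⟨h1, h2⟩
          rcases Nat.lt_succ_iff_lt_or_eq.mp h2 with h | h
          · exact Or.inr ⟨h1, h⟩
          · exact Or.inl (Fin.ext h)
        · rintro (rfl | ⟨h1, h2⟩)
          · exact ⟨hck, Nat.lt_succ_self k⟩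
          · exact ⟨h1, h2.trans (Nat.lt_succ_self k)⟩
      rw [hfilter, Finset.image_insert]
      ext s
      simp only [Finset.mem_union, Finset.mem_insert]
      tauto
    · intro i h1 h2
      rcases Nat.lt_succ_iff_lt_or_eq.mp h2 with h | h
      · exact ihlucky i h1 h
      · have : i = ik := Fin.ext h
        rw [this]; exact hspot

def Good {n : ℕ} (α : Fin n → Fin n) : Prop :=
  ∃ j i₀ m : Fin n, i₀ < j ∧ α i₀ = α j ∧
    (∀ i₁ i₂ : Fin n, i₁ ≠ j → i₂ ≠ j → α i₁ = α i₂ → i₁ = i₂) ∧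
    (∀ i, α i ≠ m) ∧
    ((m < α j ∧ ∀ i, α j ≤ α i → i ≤ j) ∨
     (α j < m ∧ ∀ i, α j ≤ α i → α i < m → i ≤ j))

theorem good_luckySet {n : ℕ} {α : Fin n → Fin n} (h : Good α) :
    ∃ j : Fin n, (Finset.univ.filter (fun i : Fin n => carSpot α i = some (α i)))
      = Finset.univ.erase j := by
  obtain ⟨j, i₀, m, hlt, hdup, hinj, hm, hord⟩ := h
  -- prefix simulation
  have hinjpre : ∀ i i' : Fin n, 0 ≤ i.val → i.val < j.val → 0 ≤ i'.val → i'.val < j.val →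
      α i = α i' → i = i' := by
    intro i i' _ h2 _ h4 h5
    exact hinj i i' (fun hc => absurd (hc ▸ h2) (lt_irrefl _)) 
      (fun hc => absurd (hc ▸ h4) (lt_irrefl _)) h5
  obtain ⟨hoccj, hluckypre⟩ := sim α 0 j.val (Nat.zero_le _) (le_of_lt j.isLt)
    (fun i _ _ => by simp [occupiedAfter]) hinjpre
  rw [occupiedAfter] at hoccj
  rw [Finset.empty_union] at hoccj
  have hoccj_mem : ∀ s : Fin n, s ∈ occupiedAfter α j.val ↔ ∃ i : Fin n, i.val < j.val ∧ α i = s := by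
    intro s
    rw [hoccj]
    simp only [Finset.mem_image, Finset.mem_filter, Finset.mem_univ, true_and]
    constructor
    · rintro ⟨i, ⟨-, h1⟩, h2⟩; exact ⟨i, h1, h2⟩
    · rintro ⟨i, h1, h2⟩; exact ⟨i, ⟨Nat.zero_le _, h1⟩, h2⟩
  -- the range fact
  have himg : ∀ s : Fin n, s ≠ m → ∃ i : Fin n, i ≠ j ∧ α i = s := by
    intro s hs
    have hcard : ((Finset.univ.erase j).image α).card = n - 1 := by
      rw [Finset.card_image_of_injOn, Finset.card_erase_of_mem (Finset.mem_univ _),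
        Finset.card_univ, Fintype.card_fin]
      intro i₁ h₁ i₂ h₂ h₃
      exact hinj i₁ i₂ (Finset.ne_of_mem_erase h₁) (Finset.ne_of_mem_erase h₂) h₃
    have hsub : (Finset.univ.erase j).image α ⊆ Finset.univ.erase m := by
      intro s hs
      simp only [Finset.mem_image] at hs
      obtain ⟨i, -, rfl⟩ := hs
      exact Finset.mem_erase.mpr ⟨hm i, Finset.mem_univ _⟩
    have heq : (Finset.univ.erase j).image α = Finset.univ.erase m := by
      apply Finset.eq_of_subset_of_card_le hsub
      rw [hcard, Finset.card_erase_of_mem (Finset.mem_univ _), Finset.card_univ,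
        Fintype.card_fin]
    have : s ∈ (Finset.univ.erase j).image α := by
      rw [heq]; exact Finset.mem_erase.mpr ⟨hs, Finset.mem_univ _⟩
    simp only [Finset.mem_image] at this
    obtain ⟨i, hi, hi2⟩ := this
    exact ⟨i, Finset.ne_of_mem_erase hi, hi2⟩
  have hmnotocc : m ∉ occupiedAfter α j.val := by
    rw [hoccj_mem]
    rintro ⟨i, -, hi⟩
    exact hm i hi
  have hpmem : α j ∈ occupiedAfter α j.val := by
    rw [hoccj_mem]
    exact ⟨i₀, hlt, hdup⟩
  -- determine carSpot of car j and the occupied set after j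
  have hkey : carSpot α j ≠ some (α j) ∧
      occupiedAfter α (j.val + 1) ⊆ insert m (occupiedAfter α j.val) := by
    rcases hord with ⟨hmp, hocond⟩ | ⟨hpm, hocond⟩
    · -- case B : m < α j, car j fails
      have hnone : carSpot α j = none := by
        rw [carSpot, nextSpot_none]
        intro q hq
        have hqm : q ≠ m := fun hc => absurd (hc ▸ lt_of_lt_of_le hmp hq) (lt_irrefl _)
        obtain ⟨i, hij, hi⟩ := himg q hqm
        have : i < j := lt_of_le_of_ne (hocond i (hi ▸ hq)) hij
        rw [hoccj_mem]
        exact ⟨i, this, hi⟩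
      refine ⟨by rw [hnone]; simp, ?_⟩
      have := occupiedAfter_succ α j
      rw [hnone] at this
      rw [this]
      exact Finset.subset_insert _ _
    · -- case A : α j < m, car j parks at m
      have hsome : carSpot α j = some m := by
        rw [carSpot]
        rcases hns : nextSpot (occupiedAfter α j.val) (α j) with _ | s
        · exfalso
          exact hmnotocc (nextSpot_none.mp hns m (le_of_lt hpm))
        · congr 1
          obtain ⟨hps, hsocc, hmin⟩ := nextSpot_some hns
          by_contra hsm
          rcases lt_or_gt_of_ne hsm with hlt' | hgt
          · obtain ⟨i, hij, hi⟩ := himg s hsm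
            have : i < j := lt_of_le_of_ne (hocond i (hi ▸ hps) (hi ▸ hlt')) hij
            exact hsocc ((hoccj_mem s).mpr ⟨i, this, hi⟩)
          · exact absurd (hmin m (le_of_lt hpm) hmnotocc) (not_le_of_gt hgt)
      constructor
      · rw [hsome]
        intro hc
        have : m = α j := by injection hc
        exact absurd hpm (this ▸ lt_irrefl _)
      · have := occupiedAfter_succ α j
        rw [hsome] at this
        rw [this]
  obtain ⟨hjunlucky, hsucc⟩ := hkey
  -- suffix simulation
  have hfree2 : ∀ i : Fin n, j.val + 1 ≤ i.val → i.val < n →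
      α i ∉ occupiedAfter α (j.val + 1) := by
    intro i h1 _ hc
    have hc' := hsucc hc
    rcases Finset.mem_insert.mp hc' with hc'' | hc''
    · exact hm i hc''
    · obtain ⟨i', hi'1, hi'2⟩ := (hoccj_mem (α i)).mp hc''
      have hij : i ≠ j := fun hc => by omega
      have hi'j : i' ≠ j := fun hc => by rw [hc] at hi'1; exact absurd hi'1 (lt_irrefl _)
      have := hinj i' i hi'j hij hi'2
      omega
  have hinj2 : ∀ i i' : Fin n, j.val + 1 ≤ i.val → i.val < n → j.val + 1 ≤ i'.val →
      i'.val < n → α i = α i' → i = i' := by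
    intro i i' h1 _ h3 _ h5
    exact hinj i i' (fun hc => by omega) (fun hc => by omega) h5
  obtain ⟨-, hluckypost⟩ := sim α (j.val + 1) n (Nat.succ_le_of_lt j.isLt) (le_refl n)
    hfree2 hinj2
  refine ⟨j, ?_⟩
  ext i
  simp only [Finset.mem_filter, Finset.mem_univ, true_and, Finset.mem_erase, and_true]
  constructor
  · intro hl
    intro hc
    exact hjunlucky (hc ▸ hl)
  · intro hij
    rcases Nat.lt_trichotomy i.val j.val with hc | hc | hc
    · exact hluckypre i (Nat.zero_le _) hc
    · exact absurd (Fin.ext hc) hij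
    · exact hluckypost i hc i.isLt

theorem lucky_good {n : ℕ} {α : Fin n → Fin n}
    (h : (luckyCount α : ℤ) = (n : ℤ) - 1) : Good α := by
  -- n ≥ 1 and the natural-number count
  have hn : 0 < n := by
    rcases Nat.eq_zero_or_pos n with rfl | hp
    · exfalso
      have h0 : luckyCount α = 0 := by
        rw [luckyCount]
        apply Finset.card_eq_zero.mpr
        apply Finset.eq_empty_of_forall_notMem
        intro i
        exact absurd i.isLt (by omega)
      rw [h0] at h
      norm_num at h
    · exact hp
  have hcount : luckyCount α = n - 1 := by omega
  -- there is a unique unlucky car j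
  have hcardun : (Finset.univ.filter (fun i : Fin n => ¬ carSpot α i = some (α i))).card = 1 := by
    have := Finset.card_filter_add_card_filter_not
      (s := (Finset.univ : Finset (Fin n))) (p := fun i => carSpot α i = some (α i))
    rw [Finset.card_univ, Fintype.card_fin] at this
    have h2 : (Finset.univ.filter (fun i : Fin n => carSpot α i = some (α i))).card = n - 1 :=
      hcount
    omega
  obtain ⟨j, hj⟩ := Finset.card_eq_one.mp hcardun
  have hjchar : ∀ i : Fin n, ¬ carSpot α i = some (α i) ↔ i = j := by
    intro i
    constructor
    · intro hi
      have : i ∈ Finset.univ.filter (fun i : Fin n => ¬ carSpot α i = some (α i)) := by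
        simp [hi]
      rw [hj] at this
      exact Finset.mem_singleton.mp this
    · intro hi
      have : j ∈ Finset.univ.filter (fun i : Fin n => ¬ carSpot α i = some (α i)) := by
        rw [hj]; exact Finset.mem_singleton_self j
      simp only [Finset.mem_filter] at this
      exact hi ▸ this.2
  have hlucky : ∀ i : Fin n, i ≠ j → carSpot α i = some (α i) := by
    intro i hi
    by_contra hc
    exact hi ((hjchar i).mp hc)
  have hjun : ¬ carSpot α j = some (α j) := (hjchar j).mpr rfl
  -- injectivity away from j
  have hinj : ∀ i₁ i₂ : Fin n, i₁ ≠ j → i₂ ≠ j → α i₁ = α i₂ → i₁ = i₂ := by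
    intro i₁ i₂ h1 h2 h3
    by_contra hne
    rcases Nat.lt_trichotomy i₁.val i₂.val with hc | hc | hc
    · have hl1 := hlucky i₁ h1
      have : α i₁ ∈ occupiedAfter α i₂.val := lucky_mem_later hl1 hc
      rw [h3] at this
      exact (not_lucky_of_mem this) (hlucky i₂ h2)
    · exact hne (Fin.ext hc)
    · have hl2 := hlucky i₂ h2
      have : α i₂ ∈ occupiedAfter α i₁.val := lucky_mem_later hl2 hc
      rw [← h3] at this
      exact (not_lucky_of_mem this) (hlucky i₁ h1)
  -- prefix simulation
  obtain ⟨hoccj, -⟩ := sim α 0 j.val (Nat.zero_le _) (le_of_lt j.isLt)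
    (fun i _ _ => by simp [occupiedAfter])
    (fun i i' _ h2 _ h4 h5 => hinj i i' (fun hc => by omega) (fun hc => by omega) h5)
  rw [occupiedAfter, Finset.empty_union] at hoccj
  have hoccj_mem : ∀ s : Fin n, s ∈ occupiedAfter α j.val ↔
      ∃ i : Fin n, i.val < j.val ∧ α i = s := by
    intro s
    rw [hoccj]
    simp only [Finset.mem_image, Finset.mem_filter, Finset.mem_univ, true_and]
    constructor
    · rintro ⟨i, ⟨-, h1⟩, h2⟩; exact ⟨i, h1, h2⟩
    · rintro ⟨i, h1, h2⟩; exact ⟨i, ⟨Nat.zero_le _, h1⟩, h2⟩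
  -- car j's preferred spot is taken
  have hpmem : α j ∈ occupiedAfter α j.val := by
    by_contra hc
    exact hjun (nextSpot_eq_self hc)
  obtain ⟨i₀, hi₀lt, hi₀⟩ := (hoccj_mem (α j)).mp hpmem
  have hi₀j : i₀ ≠ j := fun hc => by rw [hc] at hi₀lt; omega
  -- the missing value m
  have hcard : ((Finset.univ.erase j).image α).card = n - 1 := by
    rw [Finset.card_image_of_injOn, Finset.card_erase_of_mem (Finset.mem_univ _),
      Finset.card_univ, Fintype.card_fin]
    intro i₁ h₁ i₂ h₂ h₃
    exact hinj i₁ i₂ (Finset.ne_of_mem_erase h₁) (Finset.ne_of_mem_erase h₂) h₃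
  have hcompl : (Finset.univ \ (Finset.univ.erase j).image α).card = 1 := by
    rw [Finset.card_sdiff_of_subset (Finset.subset_univ _), Finset.card_univ, Fintype.card_fin, hcard]
    omega
  obtain ⟨m, hm'⟩ := Finset.card_eq_one.mp hcompl
  have hmnotim : m ∉ (Finset.univ.erase j).image α := by
    have : m ∈ Finset.univ \ (Finset.univ.erase j).image α := by
      rw [hm']; exact Finset.mem_singleton_self m
    exact (Finset.mem_sdiff.mp this).2
  have hm : ∀ i, α i ≠ m := by
    intro i hc
    rcases eq_or_ne i j with rfl | hij
    · apply hmnotim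
      exact Finset.mem_image.mpr ⟨i₀, Finset.mem_erase.mpr ⟨hi₀j, Finset.mem_univ _⟩,
        hi₀ ▸ hc ▸ rfl⟩
    · apply hmnotim
      exact Finset.mem_image.mpr ⟨i, Finset.mem_erase.mpr ⟨hij, Finset.mem_univ _⟩, hc⟩
  have himg : ∀ s : Fin n, s ∉ (Finset.univ.erase j).image α → s = m := by
    intro s hs
    have : s ∈ Finset.univ \ (Finset.univ.erase j).image α := by
      rw [Finset.mem_sdiff]; exact ⟨Finset.mem_univ _, hs⟩
    rw [hm'] at this
    exact Finset.mem_singleton.mp this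
  refine ⟨j, i₀, m, Fin.lt_def.mpr hi₀lt, hi₀, hinj, hm, ?_⟩
  rcases hns : carSpot α j with _ | s
  · -- car j fails: case B
    left
    rw [carSpot, nextSpot_none] at hns
    have hmlt : m < α j := by
      rcases lt_or_ge m (α j) with hc | hc
      · exact hc
      · exfalso
        obtain ⟨i, hij2, hi⟩ := (hoccj_mem m).mp (hns m hc)
        exact hm i hi
    refine ⟨hmlt, fun i hi => ?_⟩
    obtain ⟨i', hi'lt, hi'⟩ := (hoccj_mem (α i)).mp (hns (α i) hi)
    rcases eq_or_ne i j with rfl | hij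
    · exact le_refl _
    · have hi'j : i' ≠ j := fun hc => by rw [hc] at hi'lt; omega
      have := hinj i' i hi'j hij hi'
      rw [← this]
      exact le_of_lt (Fin.lt_def.mpr (hi'lt.trans_le (le_refl _)))
  · -- car j parks at s ≠ α j : case A
    right
    rw [carSpot] at hns
    obtain ⟨hps, hsocc, hmin⟩ := nextSpot_some hns
    have hsp : s ≠ α j := by
      intro hc
      exact hjun (by rw [carSpot, hns, hc])
    have hsm : s = m := by
      apply himg
      intro hc
      obtain ⟨i, hi1, hi2⟩ := Finset.mem_image.mp hc
      have hij : i ≠ j := Finset.ne_of_mem_erase hi1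
      rcases Nat.lt_trichotomy i.val j.val with hc' | hc' | hc'
      · exact hsocc ((hoccj_mem s).mpr ⟨i, hc', hi2⟩)
      · exact hij (Fin.ext hc')
      · have hsm : s ∈ occupiedAfter α (j.val + 1) := carSpot_mem_occupied (by rw [carSpot, hns])
        have : α i ∈ occupiedAfter α i.val := by
          rw [← hi2] at *
          exact occupiedAfter_mono α hc' hsm
        exact (not_lucky_of_mem this) (hlucky i hij)
    refine ⟨hsm ▸ lt_of_le_of_ne hps (Ne.symm hsp), fun i hi1 hi2 => ?_⟩
    rcases eq_or_ne i j with rfl | hij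
    · exact le_refl _
    · have : α i ∈ occupiedAfter α j.val := by
        by_contra hc
        have := hmin (α i) hi1 hc
        rw [hsm] at this
        exact absurd hi2 (not_lt_of_ge this)
      obtain ⟨i', hi'lt, hi'⟩ := (hoccj_mem (α i)).mp this
      have hi'j : i' ≠ j := fun hc => by rw [hc] at hi'lt; omega
      have := hinj i' i hi'j hij hi'
      rw [← this]
      exact le_of_lt (Fin.lt_def.mpr hi'lt)

theorem good_lucky {n : ℕ} {α : Fin n → Fin n} (hg : Good α) :
    (luckyCount α : ℤ) = (n : ℤ) - 1 := by
  obtain ⟨j, hj⟩ := good_luckySet hg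
  have hn : 0 < n := j.pos
  have : luckyCount α = n - 1 := by
    rw [luckyCount, hj, Finset.card_erase_of_mem (Finset.mem_univ _), Finset.card_univ,
      Fintype.card_fin]
  omega

-- permutation counting lemma
theorem perm_last_count {n : ℕ} (W : Finset (Fin n)) (hW : W.Nonempty) (w : Fin n)
    (hw : w ∈ W) :
    (Finset.univ.filter
      (fun σ : Equiv.Perm (Fin n) => ∀ v ∈ W, σ.symm v ≤ σ.symm w)).card * W.card =
      Nat.factorial n := by
  classical
  set B : Fin n → Finset (Equiv.Perm (Fin n)) :=
    fun w' => Finset.univ.filter (fun σ : Equiv.Perm (Fin n) => ∀ v ∈ W, σ.symm v ≤ σ.symm w')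
    with hB
  -- the "argmax" map
  have hWne : ∀ σ : Equiv.Perm (Fin n), (W.image σ.symm).Nonempty := fun σ => hW.image _
  set f : Equiv.Perm (Fin n) → Fin n := fun σ => σ ((W.image σ.symm).max' (hWne σ)) with hf
  have hfW : ∀ σ, f σ ∈ W := by
    intro σ
    have : (W.image σ.symm).max' (hWne σ) ∈ W.image σ.symm := Finset.max'_mem _ _
    obtain ⟨v, hv, hv2⟩ := Finset.mem_image.mp this
    rw [hf]
    simp only
    rw [← hv2, Equiv.apply_symm_apply]
    exact hv
  have hchar : ∀ (σ : Equiv.Perm (Fin n)) (w' : Fin n), w' ∈ W →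
      ((∀ v ∈ W, σ.symm v ≤ σ.symm w') ↔ f σ = w') := by
    intro σ w' hw'
    have hsymmf : σ.symm (f σ) = (W.image σ.symm).max' (hWne σ) := by
      rw [hf]; simp only [Equiv.symm_apply_apply]
    constructor
    · intro hcond
      have h1 : σ.symm (f σ) ≤ σ.symm w' := hcond (f σ) (hfW σ)
      have h2 : σ.symm w' ≤ σ.symm (f σ) := by
        rw [hsymmf]
        exact Finset.le_max' _ _ (Finset.mem_image_of_mem _ hw')
      have := le_antisymm h1 h2
      have := σ.symm.injective this
      exact this
    · rintro rfl
      intro v hv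
      rw [hsymmf]
      exact Finset.le_max' _ _ (Finset.mem_image_of_mem _ hv)
  -- the B w' for w' ∈ W partition all permutations
  have hsum : ∑ w' ∈ W, (B w').card = Nat.factorial n := by
    have := Finset.card_eq_sum_card_fiberwise
      (s := (Finset.univ : Finset (Equiv.Perm (Fin n)))) (t := W) (f := f)
      (fun σ _ => hfW σ)
    rw [Finset.card_univ, Fintype.card_perm, Fintype.card_fin] at this
    rw [this]
    apply Finset.sum_congr rfl
    intro w' hw'
    congr 1
    apply Finset.filter_congr
    intro σ _
    exact hchar σ w' hw' 
  -- all the B w' have the same cardinality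
  have hcardeq : ∀ w' ∈ W, (B w').card = (B w).card := by
    intro w' hw'
    refine Finset.card_bij' (fun σ _ => σ.trans (Equiv.swap w' w))
      (fun σ _ => σ.trans (Equiv.swap w' w)) ?_ ?_
      (fun σ _ => Equiv.ext fun x => by simp) (fun σ _ => Equiv.ext fun x => by simp)
    · intro σ hσ
      simp only [hB, Finset.mem_filter, Finset.mem_univ, true_and] at hσ ⊢
      intro v hv
      have key : ∀ u : Fin n, (σ.trans (Equiv.swap w' w)).symm u = σ.symm (Equiv.swap w' w u) := by
        intro u
        rw [Equiv.symm_trans_apply, Equiv.symm_swap]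
      rw [key, key]
      rw [Equiv.swap_apply_right]
      apply hσ
      rcases eq_or_ne v w' with rfl | h1
      · rw [Equiv.swap_apply_left]; exact hw
      · rcases eq_or_ne v w with rfl | h2
        · rw [Equiv.swap_apply_right]; exact hw'
        · rw [Equiv.swap_apply_of_ne_of_ne h1 h2]; exact hv
    · intro σ hσ
      simp only [hB, Finset.mem_filter, Finset.mem_univ, true_and] at hσ ⊢
      intro v hv
      have key : ∀ u : Fin n, (σ.trans (Equiv.swap w' w)).symm u = σ.symm (Equiv.swap w' w u) := by
        intro u
        rw [Equiv.symm_trans_apply, Equiv.symm_swap]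
      rw [key, key]
      rw [Equiv.swap_apply_left]
      apply hσ
      rcases eq_or_ne v w' with rfl | h1
      · rw [Equiv.swap_apply_left]; exact hw
      · rcases eq_or_ne v w with rfl | h2
        · rw [Equiv.swap_apply_right]; exact hw'
        · rw [Equiv.swap_apply_of_ne_of_ne h1 h2]; exact hv
  have : ∑ w' ∈ W, (B w').card = (B w).card * W.card := by
    rw [Finset.sum_congr rfl hcardeq, Finset.sum_const, smul_eq_mul, mul_comm]
  rw [← hsum, this]

def Wset {n : ℕ} (p m : Fin n) : Finset (Fin n) :=
  if m < p then insert m (Finset.Ici p) else Finset.Icc p m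

def TCond {n : ℕ} (σ : Equiv.Perm (Fin n)) (p m : Fin n) : Prop :=
  p ≠ m ∧ ∀ v ∈ Wset p m, σ.symm v ≤ σ.symm m

instance {n : ℕ} (σ : Equiv.Perm (Fin n)) (p m : Fin n) : Decidable (TCond σ p m) := by
  unfold TCond; infer_instance

theorem self_mem_Wset {n : ℕ} {p m : Fin n} (h : p ≠ m) : p ∈ Wset p m := by
  rw [Wset]
  split_ifs with hc
  · exact Finset.mem_insert_of_mem (Finset.mem_Ici.mpr (le_refl _))
  · exact Finset.mem_Icc.mpr ⟨le_refl _, le_of_lt (lt_of_le_of_ne (le_of_not_gt hc) h)⟩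

theorem mem_Wset_self {n : ℕ} {p m : Fin n} (h : p ≠ m) : m ∈ Wset p m := by
  rw [Wset]
  split_ifs with hc
  · exact Finset.mem_insert_self _ _
  · exact Finset.mem_Icc.mpr ⟨le_of_lt (lt_of_le_of_ne (le_of_not_gt hc) h), le_refl _⟩

def Gmap {n : ℕ} (σ : Equiv.Perm (Fin n)) (p m : Fin n) : Fin n → Fin n :=
  Function.update (⇑σ) (σ.symm m) p

theorem Gmap_apply_j {n : ℕ} (σ : Equiv.Perm (Fin n)) (p m : Fin n) :
    Gmap σ p m (σ.symm m) = p := Function.update_self _ _ _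

theorem Gmap_apply_ne {n : ℕ} (σ : Equiv.Perm (Fin n)) (p m : Fin n) {i : Fin n}
    (h : i ≠ σ.symm m) : Gmap σ p m i = σ i := Function.update_of_ne h _ _

theorem Gmap_ne_m {n : ℕ} {σ : Equiv.Perm (Fin n)} {p m : Fin n} (hpm : p ≠ m) (i : Fin n) :
    Gmap σ p m i ≠ m := by
  rcases eq_or_ne i (σ.symm m) with rfl | hi
  · rw [Gmap_apply_j]; exact hpm
  · rw [Gmap_apply_ne σ p m hi]
    intro hc
    exact hi (by rw [← hc, Equiv.symm_apply_apply])

theorem Gmap_surj_ne {n : ℕ} (σ : Equiv.Perm (Fin n)) (p m : Fin n)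
    {q : Fin n} (hq : q ≠ m) : ∃ i, Gmap σ p m i = q := by
  refine ⟨σ.symm q, ?_⟩
  rw [Gmap_apply_ne σ p m (fun hc => hq (σ.symm.injective hc)), Equiv.apply_symm_apply]

theorem Gmap_inj_off {n : ℕ} (σ : Equiv.Perm (Fin n)) (p m : Fin n) :
    ∀ i₁ i₂ : Fin n, i₁ ≠ σ.symm m → i₂ ≠ σ.symm m → Gmap σ p m i₁ = Gmap σ p m i₂ →
      i₁ = i₂ := by
  intro i₁ i₂ h1 h2 h3
  rw [Gmap_apply_ne σ p m h1, Gmap_apply_ne σ p m h2] at h3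
  exact σ.injective h3

theorem Gmap_dup {n : ℕ} {σ : Equiv.Perm (Fin n)} {p m : Fin n} (hpm : p ≠ m) :
    σ.symm p ≠ σ.symm m ∧ Gmap σ p m (σ.symm p) = p := by
  have hne : σ.symm p ≠ σ.symm m := fun hc => hpm (σ.symm.injective hc)
  exact ⟨hne, by rw [Gmap_apply_ne σ p m hne, Equiv.apply_symm_apply]⟩

theorem Gmap_good {n : ℕ} {σ : Equiv.Perm (Fin n)} {p m : Fin n} (h : TCond σ p m) :
    Good (Gmap σ p m) := by
  obtain ⟨hpm, hcond⟩ := h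
  obtain ⟨hne, hdup⟩ := Gmap_dup (σ := σ) hpm
  have hlt : σ.symm p < σ.symm m :=
    lt_of_le_of_ne (hcond p (self_mem_Wset hpm)) hne
  refine ⟨σ.symm m, σ.symm p, m, hlt, by rw [hdup, Gmap_apply_j], Gmap_inj_off σ p m,
    Gmap_ne_m hpm, ?_⟩
  rw [Gmap_apply_j]
  rcases lt_or_gt_of_ne (Ne.symm hpm) with hmp | hpm'
  · left
    refine ⟨hmp, fun i hi => ?_⟩
    rcases eq_or_ne i (σ.symm m) with rfl | hij
    · exact le_refl _
    · rw [Gmap_apply_ne σ p m hij] at hi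
      have : σ i ∈ Wset p m := by
        rw [Wset, if_pos hmp]
        exact Finset.mem_insert_of_mem (Finset.mem_Ici.mpr hi)
      have := hcond (σ i) this
      rwa [Equiv.symm_apply_apply] at this
  · right
    refine ⟨hpm', fun i hi1 hi2 => ?_⟩
    rcases eq_or_ne i (σ.symm m) with rfl | hij
    · exact le_refl _
    · rw [Gmap_apply_ne σ p m hij] at hi1 hi2
      have : σ i ∈ Wset p m := by
        rw [Wset, if_neg (not_lt_of_gt hpm')]
        exact Finset.mem_Icc.mpr ⟨hi1, le_of_lt hi2⟩
      have := hcond (σ i) this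
      rwa [Equiv.symm_apply_apply] at this

theorem luckyL_eq_triples (n : ℕ) :
    luckyL n = ((Finset.univ : Finset (Equiv.Perm (Fin n) × Fin n × Fin n)).filter
      (fun t => TCond t.1 t.2.1 t.2.2)).card := by
  rw [luckyL]
  refine (Finset.card_bij (fun t _ => Gmap t.1 t.2.1 t.2.2) ?_ ?_ ?_).symm
  · -- well-defined
    rintro ⟨σ, p, m⟩ ht
    simp only [Finset.mem_filter, Finset.mem_univ, true_and] at ht ⊢
    exact good_lucky (Gmap_good ht)
  · -- injective
    rintro ⟨σ, p, m⟩ h1 ⟨σ', p', m'⟩ h2 heq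
    simp only [Finset.mem_filter, Finset.mem_univ, true_and] at h1 h2
    obtain ⟨hpm, hcond⟩ := h1
    obtain ⟨hpm', hcond'⟩ := h2
    simp only at heq
    -- m = m'
    have hmm : m = m' := by
      by_contra hne
      obtain ⟨i, hi⟩ := Gmap_surj_ne σ' p' m' (q := m) hne
      rw [← heq] at hi
      exact Gmap_ne_m hpm i hi
    subst hmm
    -- j = j'
    obtain ⟨hne₀, hdup₀⟩ := Gmap_dup (σ := σ) (m := m) hpm
    obtain ⟨hne₀', hdup₀'⟩ := Gmap_dup (σ := σ') (m := m) hpm'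
    have hlt₀ : σ.symm p < σ.symm m := lt_of_le_of_ne (hcond p (self_mem_Wset hpm)) hne₀
    have hlt₀' : σ'.symm p' < σ'.symm m :=
      lt_of_le_of_ne (hcond' p' (self_mem_Wset hpm')) hne₀'
    have hjj : σ.symm m = σ'.symm m := by
      by_contra hjj
      have e1 : σ.symm p = σ'.symm m := by
        by_contra hc
        apply absurd (Gmap_inj_off σ' p' m (σ.symm p) (σ.symm m) hc hjj ?_) hne₀
        rw [← heq, hdup₀, Gmap_apply_j]
      have e2 : σ'.symm p' = σ.symm m := by
        by_contra hc
        apply absurd (Gmap_inj_off σ p m (σ'.symm p') (σ'.symm m) hc (Ne.symm hjj) ?_)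
          hne₀'
        rw [heq, hdup₀', Gmap_apply_j]
      rw [e1] at hlt₀
      rw [e2] at hlt₀'
      exact absurd (hlt₀.trans hlt₀') (lt_irrefl _)
    -- p = p'
    have hpp : p = p' := by
      have := congrFun heq (σ.symm m)
      rw [Gmap_apply_j, hjj, Gmap_apply_j] at this
      exact this
    subst hpp
    -- σ = σ'
    have hσσ : σ = σ' := by
      apply Equiv.ext
      intro i
      rcases eq_or_ne i (σ.symm m) with rfl | hi
      · rw [Equiv.apply_symm_apply, hjj, Equiv.apply_symm_apply]
      · have := congrFun heq i
        rwa [Gmap_apply_ne σ p m hi, Gmap_apply_ne σ' p m (hjj ▸ hi)] at this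
    rw [hσσ]
  · -- surjective
    intro α hα
    simp only [Finset.mem_filter, Finset.mem_univ, true_and] at hα
    obtain ⟨j, i₀, m, hlt, hdup, hinj, hm, hord⟩ := lucky_good hα
    set g : Fin n → Fin n := Function.update α j m with hg
    have hgj : g j = m := Function.update_self _ _ _
    have hgne : ∀ i, i ≠ j → g i = α i := fun i hi => Function.update_of_ne hi _ _
    have hginj : Function.Injective g := by
      intro i₁ i₂ h
      rcases eq_or_ne i₁ j with h1 | h1
      · rcases eq_or_ne i₂ j with h2 | h2
        · exact h1.trans h2.symm
        · rw [h1, hgj, hgne i₂ h2] at h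
          exact absurd h.symm (hm i₂)
      · rcases eq_or_ne i₂ j with h2 | h2
        · rw [h2, hgj, hgne i₁ h1] at h
          exact absurd h (hm i₁)
        · rw [hgne i₁ h1, hgne i₂ h2] at h
          exact hinj i₁ i₂ h1 h2 h
    have hgbij : Function.Bijective g := Finite.injective_iff_bijective.mp hginj
    set σ : Equiv.Perm (Fin n) := Equiv.ofBijective g hgbij with hσdef
    have hσapp : ∀ i, σ i = g i := fun i => rfl
    have hσj : σ.symm m = j := by
      rw [Equiv.symm_apply_eq, hσapp, hgj]
    have hcond : ∀ v ∈ Wset (α j) m, σ.symm v ≤ σ.symm m := by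
      intro v hv
      rw [hσj]
      rcases eq_or_ne (σ.symm v) j with he | he
      · rw [he]
      · have hαv : α (σ.symm v) = v := by
          have : σ (σ.symm v) = v := Equiv.apply_symm_apply _ _
          rw [hσapp, hgne _ he] at this
          exact this
        rcases hord with ⟨hmp, cond1⟩ | ⟨hpm', cond2⟩
        · rw [Wset, if_pos hmp] at hv
          rcases Finset.mem_insert.mp hv with hv1 | hv2
          · exact absurd (hv1 ▸ hαv) (hm _)
          · refine cond1 _ ?_
            rw [hαv]
            exact Finset.mem_Ici.mp hv2
        · rw [Wset, if_neg (not_lt_of_gt hpm')] at hv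
          obtain ⟨hv1, hv2⟩ := Finset.mem_Icc.mp hv
          have hvm : v ≠ m := fun hc => hm _ (hc ▸ hαv)
          refine cond2 _ ?_ ?_
          · rw [hαv]; exact hv1
          · rw [hαv]; exact lt_of_le_of_ne hv2 hvm
    refine ⟨⟨σ, α j, m⟩, ?_, ?_⟩
    · simp only [Finset.mem_filter, Finset.mem_univ, true_and]
      exact ⟨hm j, hcond⟩
    · show Gmap σ (α j) m = α
      funext i
      rcases eq_or_ne i j with hij | hij
      · rw [hij]
        have h0 : Gmap σ (α j) m (σ.symm m) = α j := Gmap_apply_j σ (α j) m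
        rwa [hσj] at h0
      · rw [Gmap_apply_ne σ (α j) m (by rw [hσj]; exact hij), hσapp, hgne i hij]

theorem triples_card (n : ℕ) :
    ((Finset.univ : Finset (Equiv.Perm (Fin n) × Fin n × Fin n)).filter
      (fun t => TCond t.1 t.2.1 t.2.2)).card
    = ∑ pm : Fin n × Fin n,
        (Finset.univ.filter (fun σ : Equiv.Perm (Fin n) => TCond σ pm.1 pm.2)).card := by
  rw [Finset.card_eq_sum_card_fiberwise (f := fun t => t.2)
    (t := (Finset.univ : Finset (Fin n × Fin n))) (fun _ _ => Finset.mem_univ _)]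
  apply Finset.sum_congr rfl
  intro pm _
  refine Finset.card_bij (fun t _ => t.1) ?_ ?_ ?_
  · rintro ⟨σ, pm'⟩ ht
    simp only [Finset.mem_filter, Finset.mem_univ, true_and] at ht ⊢
    obtain ⟨h1, h2⟩ := ht
    rw [← h2]
    exact h1
  · rintro ⟨σ, pm'⟩ h1 ⟨σ', pm''⟩ h2 heq
    simp only [Finset.mem_filter, Finset.mem_univ, true_and] at h1 h2
    simp only at heq
    rw [Prod.ext_iff]
    exact ⟨heq, h1.2.trans h2.2.symm⟩
  · intro σ hσ
    simp only [Finset.mem_filter, Finset.mem_univ, true_and] at hσ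
    exact ⟨⟨σ, pm⟩, by simp [hσ], rfl⟩

theorem Wset_card_pos {n : ℕ} {p m : Fin n} (h : p ≠ m) : 0 < (Wset p m).card :=
  Finset.card_pos.mpr ⟨m, mem_Wset_self h⟩

theorem fiber_card {n : ℕ} {p m : Fin n} (h : p ≠ m) :
    (Finset.univ.filter (fun σ : Equiv.Perm (Fin n) => TCond σ p m)).card
      * (Wset p m).card = Nat.factorial n := by
  have key := perm_last_count (Wset p m) ⟨m, mem_Wset_self h⟩ m (mem_Wset_self h)
  rw [← key]
  congr 2
  apply Finset.filter_congr
  intro σ _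
  simp only [TCond]
  constructor
  · exact fun hc => hc.2
  · exact fun hc => ⟨h, hc⟩

theorem fiber_card_diag {n : ℕ} (p : Fin n) :
    (Finset.univ.filter (fun σ : Equiv.Perm (Fin n) => TCond σ p p)).card = 0 := by
  rw [Finset.card_eq_zero]
  apply Finset.eq_empty_of_forall_notMem
  intro σ hσ
  simp only [Finset.mem_filter] at hσ
  exact hσ.2.1 rfl

theorem luckyL_rat (n : ℕ) :
    (luckyL n : ℚ) = ∑ pm : Fin n × Fin n,
      (if pm.1 = pm.2 then 0 else (Nat.factorial n : ℚ) / ((Wset pm.1 pm.2).card : ℚ)) := by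
  rw [luckyL_eq_triples, triples_card]
  push_cast
  apply Finset.sum_congr rfl
  intro pm _
  rcases eq_or_ne pm.1 pm.2 with h | h
  · rw [if_pos h]
    rcases pm with ⟨p, m⟩
    simp only at h
    subst h
    rw [fiber_card_diag]
    norm_num
  · rw [if_neg h]
    have hpos : (0 : ℚ) < ((Wset pm.1 pm.2).card : ℚ) := by
      exact_mod_cast Wset_card_pos h
    rw [eq_div_iff (ne_of_gt hpos)]
    exact_mod_cast fiber_card h

theorem Wset_card {n : ℕ} {p m : Fin n} (h : p ≠ m) :
    (Wset p m).card = if m < p then n - p.val + 1 else m.val - p.val + 1 := by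
  rw [Wset]
  split_ifs with hc
  · rw [Finset.card_insert_of_notMem, Fin.card_Ici]
    intro hmem
    exact absurd (Finset.mem_Ici.mp hmem) (not_le_of_gt hc)
  · rw [Fin.card_Icc]
    have : p.val < m.val := Fin.lt_def.mp (lt_of_le_of_ne (le_of_not_gt hc) h)
    omega

/-- summand as a function of natural numbers -/
noncomputable def Tfun (n a b : ℕ) : ℚ :=
  if a = b then 0
  else (Nat.factorial n : ℚ) / (((if b < a then n - a + 1 else b - a + 1) : ℕ) : ℚ)

theorem luckyL_rat2 (n : ℕ) :
    (luckyL n : ℚ) = ∑ a ∈ Finset.range n, ∑ b ∈ Finset.range n, Tfun n a b := by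
  rw [luckyL_rat, Fintype.sum_prod_type]
  have key : ∀ p m : Fin n,
      (if p = m then (0 : ℚ) else (Nat.factorial n : ℚ) / ((Wset p m).card : ℚ))
        = Tfun n p.val m.val := by
    intro p m
    rcases eq_or_ne p m with rfl | h
    · rw [if_pos rfl, Tfun, if_pos rfl]
    · rw [if_neg h, Tfun, if_neg (fun hc => h (Fin.ext hc)), Wset_card h]
      simp only [Fin.lt_def]
  calc ∑ p : Fin n, ∑ m : Fin n,
      (if p = m then (0 : ℚ) else (Nat.factorial n : ℚ) / ((Wset p m).card : ℚ))
      = ∑ p : Fin n, ∑ m : Fin n, Tfun n p.val m.val := by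
        apply Finset.sum_congr rfl
        intro p _
        apply Finset.sum_congr rfl
        intro m _
        exact key p m
    _ = ∑ p : Fin n, ∑ b ∈ Finset.range n, Tfun n p.val b := by
        apply Finset.sum_congr rfl
        intro p _
        exact Fin.sum_univ_eq_sum_range (fun b => Tfun n p.val b) n
    _ = ∑ a ∈ Finset.range n, ∑ b ∈ Finset.range n, Tfun n a b :=
        Fin.sum_univ_eq_sum_range (fun a => ∑ b ∈ Finset.range n, Tfun n a b) n

theorem inner_split {n a : ℕ} (ha : a < n) :
    ∑ b ∈ Finset.range n, Tfun n a b
      = (a : ℚ) * ((Nat.factorial n : ℚ) / (((n - a + 1 : ℕ)) : ℚ))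
        + ∑ b ∈ Finset.Ico (a + 1) n,
            (Nat.factorial n : ℚ) / (((b - a + 1 : ℕ)) : ℚ) := by
  rw [Finset.range_eq_Ico, ← Finset.sum_Ico_consecutive _ (Nat.zero_le a) (le_of_lt ha),
    Finset.sum_eq_sum_Ico_succ_bot ha]
  have h1 : ∑ b ∈ Finset.Ico 0 a, Tfun n a b
      = (a : ℚ) * ((Nat.factorial n : ℚ) / (((n - a + 1 : ℕ)) : ℚ)) := by
    rw [← Finset.range_eq_Ico]
    have hcongr : ∀ b ∈ Finset.range a,
        Tfun n a b = (Nat.factorial n : ℚ) / (((n - a + 1 : ℕ)) : ℚ) := by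
      intro b hb
      have hb' := Finset.mem_range.mp hb
      rw [Tfun, if_neg (by omega), if_pos hb']
    rw [Finset.sum_congr rfl hcongr, Finset.sum_const, Finset.card_range, nsmul_eq_mul]
  have h2 : Tfun n a a = 0 := by rw [Tfun, if_pos rfl]
  have h3 : ∑ b ∈ Finset.Ico (a + 1) n, Tfun n a b
      = ∑ b ∈ Finset.Ico (a + 1) n, (Nat.factorial n : ℚ) / (((b - a + 1 : ℕ)) : ℚ) := by
    apply Finset.sum_congr rfl
    intro b hb
    have : a + 1 ≤ b := (Finset.mem_Ico.mp hb).1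
    rw [Tfun, if_neg (by omega), if_neg (by omega)]
  rw [h1, h2, h3]
  ring

theorem part1_eq (n : ℕ) :
    ∑ a ∈ Finset.range n, (a : ℚ) * ((Nat.factorial n : ℚ) / (((n - a + 1 : ℕ)) : ℚ))
      = ∑ j ∈ Finset.range n,
          ((n - 1 - j : ℕ) : ℚ) * ((Nat.factorial n : ℚ) / (((j + 2 : ℕ)) : ℚ)) := by
  rw [← Finset.sum_range_reflect]
  apply Finset.sum_congr rfl
  intro j hj
  have hj' : j < n := Finset.mem_range.mp hj
  have : n - (n - 1 - j) + 1 = j + 2 := by omega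
  rw [this]

theorem part2_inner {n a : ℕ} (ha : a < n) :
    ∑ b ∈ Finset.Ico (a + 1) n, (Nat.factorial n : ℚ) / (((b - a + 1 : ℕ)) : ℚ)
      = ∑ t ∈ Finset.range (n - 1 - a), (Nat.factorial n : ℚ) / (((t + 2 : ℕ)) : ℚ) := by
  rw [Finset.sum_Ico_eq_sum_range]
  have : n - (a + 1) = n - 1 - a := by omega
  rw [this]
  apply Finset.sum_congr rfl
  intro t _
  have : a + 1 + t - a + 1 = t + 2 := by omega
  rw [this]

theorem swap_sum (g : ℕ → ℚ) (n : ℕ) :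
    ∑ a ∈ Finset.range n, ∑ t ∈ Finset.range (n - 1 - a), g t
      = ∑ t ∈ Finset.range n, ((n - 1 - t : ℕ) : ℚ) * g t := by
  induction n with
  | zero => simp
  | succ n ih =>
    rw [Finset.sum_range_succ, (show n + 1 - 1 - n = 0 by omega), Finset.range_zero,
      Finset.sum_empty, add_zero]
    have h1 : ∀ a ∈ Finset.range n,
        ∑ t ∈ Finset.range (n + 1 - 1 - a), g t
          = (∑ t ∈ Finset.range (n - 1 - a), g t) + g (n - 1 - a) := by
      intro a ha
      have : n + 1 - 1 - a = (n - 1 - a) + 1 := by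
        have := Finset.mem_range.mp ha; omega
      rw [this, Finset.sum_range_succ]
    rw [Finset.sum_congr rfl h1, Finset.sum_add_distrib, ih]
    have h2 : ∑ a ∈ Finset.range n, g (n - 1 - a) = ∑ a ∈ Finset.range n, g a :=
      Finset.sum_range_reflect g n
    rw [h2]
    rw [Finset.sum_range_succ, (show n + 1 - 1 - n = 0 by omega), Nat.cast_zero, zero_mul,
      add_zero]
    rw [← Finset.sum_add_distrib]
    apply Finset.sum_congr rfl
    intro t ht
    have ht' : t < n := Finset.mem_range.mp ht
    have : ((n + 1 - 1 - t : ℕ) : ℚ) = ((n - 1 - t : ℕ) : ℚ) + 1 := by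
      have : (n + 1 - 1 - t : ℕ) = (n - 1 - t) + 1 := by omega
      rw [this]; push_cast; ring
    rw [this]
    ring

noncomputable def Rsum (n : ℕ) : ℚ := ∑ k ∈ Finset.Icc 2 n, ((n : ℚ) + 1 - k) / k

noncomputable def Hsum (n : ℕ) : ℚ := ∑ k ∈ Finset.Icc 2 n, 1 / (k : ℚ)

theorem luckyL_formula (n : ℕ) :
    (luckyL n : ℚ) = 2 * (Nat.factorial n : ℚ) * Rsum n := by
  rw [luckyL_rat2]
  have hsplit : ∑ a ∈ Finset.range n, ∑ b ∈ Finset.range n, Tfun n a b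
      = (∑ a ∈ Finset.range n, (a : ℚ) * ((Nat.factorial n : ℚ) / (((n - a + 1 : ℕ)) : ℚ)))
        + ∑ a ∈ Finset.range n, ∑ b ∈ Finset.Ico (a + 1) n,
            (Nat.factorial n : ℚ) / (((b - a + 1 : ℕ)) : ℚ) := by
    rw [← Finset.sum_add_distrib]
    apply Finset.sum_congr rfl
    intro a ha
    exact inner_split (Finset.mem_range.mp ha)
  rw [hsplit, part1_eq]
  have hpart2 : ∑ a ∈ Finset.range n, ∑ b ∈ Finset.Ico (a + 1) n,
      (Nat.factorial n : ℚ) / (((b - a + 1 : ℕ)) : ℚ)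
      = ∑ t ∈ Finset.range n,
          ((n - 1 - t : ℕ) : ℚ) * ((Nat.factorial n : ℚ) / (((t + 2 : ℕ)) : ℚ)) := by
    rw [Finset.sum_congr rfl (fun a ha => part2_inner (Finset.mem_range.mp ha))]
    exact swap_sum (fun t => (Nat.factorial n : ℚ) / (((t + 2 : ℕ)) : ℚ)) n
  rw [hpart2, ← two_mul]
  have hR : ∑ t ∈ Finset.range n,
      ((n - 1 - t : ℕ) : ℚ) * ((Nat.factorial n : ℚ) / (((t + 2 : ℕ)) : ℚ))
      = (Nat.factorial n : ℚ) * Rsum n := by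
    rcases Nat.eq_zero_or_pos n with rfl | hn
    · simp [Rsum]
    · have hn1 : n = (n - 1) + 1 := by omega
      rw [Rsum, ← Finset.Ico_add_one_right_eq_Icc, Finset.sum_Ico_eq_sum_range]
      have hrange : n + 1 - 2 = n - 1 := by omega
      rw [hrange, Finset.mul_sum]
      set F : ℕ → ℚ := fun t =>
        ((n - 1 - t : ℕ) : ℚ) * ((Nat.factorial n : ℚ) / (((t + 2 : ℕ)) : ℚ)) with hF
      have hsp : ∑ t ∈ Finset.range n, F t
          = ∑ t ∈ Finset.range (n - 1), F t + F (n - 1) := by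
        rw [show Finset.range n = Finset.range ((n - 1) + 1) by rw [← hn1],
          Finset.sum_range_succ]
      have hzero : F (n - 1) = 0 := by
        rw [hF]
        simp only [Nat.sub_self, Nat.cast_zero, zero_mul]
      rw [hsp, hzero, add_zero]
      apply Finset.sum_congr rfl
      intro t ht
      have ht' : t < n - 1 := Finset.mem_range.mp ht
      have hc1 : ((n - 1 - t : ℕ) : ℚ) = (n : ℚ) + 1 - ((2 + t : ℕ) : ℚ) := by
        have h1 : (n - 1 - t) + (2 + t) = n + 1 := by omega
        have := congrArg (fun x : ℕ => (x : ℚ)) h1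
        push_cast at this
        push_cast
        linarith
      simp only [hF]
      rw [hc1]
      have h2 : ((2 + t : ℕ) : ℚ) = ((t + 2 : ℕ) : ℚ) := by push_cast; ring
      rw [h2]
      ring
  rw [hR]
  ring

theorem Rsum_succ (n : ℕ) : Rsum (n + 1) = Rsum n + Hsum (n + 1) := by
  rcases Nat.eq_zero_or_pos n with rfl | hn
  · have h1 : Finset.Icc 2 1 = (∅ : Finset ℕ) := Finset.Icc_eq_empty (by omega)
    have h0 : Finset.Icc 2 0 = (∅ : Finset ℕ) := Finset.Icc_eq_empty (by omega)
    rw [Rsum, Rsum, Hsum, h1, h0]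
    simp
  · have key : ∀ k : ℕ, ((n + 1 : ℕ) : ℚ) + 1 - k = ((n : ℚ) + 1 - k) + 1 := by
      intro k; push_cast; ring
    rw [Rsum]
    have : ∀ k ∈ Finset.Icc 2 (n + 1),
        (((n + 1 : ℕ) : ℚ) + 1 - k) / k = ((n : ℚ) + 1 - k) / k + 1 / k := by
      intro k _
      rw [key k, add_div]
    rw [Finset.sum_congr rfl this, Finset.sum_add_distrib]
    have h2 : ∑ k ∈ Finset.Icc 2 (n + 1), ((n : ℚ) + 1 - k) / k = Rsum n := by
      rw [Finset.sum_Icc_succ_top (by omega : 2 ≤ n + 1)]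
      have : ((n : ℚ) + 1 - ((n + 1 : ℕ) : ℚ)) / ((n + 1 : ℕ) : ℚ) = 0 := by
        rw [div_eq_zero_iff]; left; push_cast; ring
      rw [this, add_zero, Rsum]
    rw [h2, Hsum]

theorem Hsum_succ (n : ℕ) : Hsum (n + 2) = Hsum (n + 1) + 1 / ((n : ℚ) + 2) := by
  rw [Hsum, Finset.sum_Icc_succ_top (by omega : 2 ≤ n + 2), Hsum]
  congr 1
  push_cast
  ring

/-- `L n` satisfies `Lₙ = 2n Lₙ₋₁ - n(n-1) Lₙ₋₂ + 2(n-1)!` for `n ≥ 2`,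
with `L₀ = L₁ = 0`. -/
theorem luckyL_recurrence :
    luckyL 0 = 0 ∧ luckyL 1 = 0 ∧
    ∀ n : ℕ, 2 ≤ n →
      (luckyL n : ℤ) = 2 * n * luckyL (n - 1) - n * (n - 1) * luckyL (n - 2)
        + 2 * Nat.factorial (n - 1) := by
  have hR0 : Rsum 0 = 0 := by
    rw [Rsum, Finset.Icc_eq_empty (by omega : ¬ (2 : ℕ) ≤ 0), Finset.sum_empty]
  have hR1 : Rsum 1 = 0 := by
    rw [Rsum, Finset.Icc_eq_empty (by omega : ¬ (2 : ℕ) ≤ 1), Finset.sum_empty]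
  refine ⟨?_, ?_, ?_⟩
  · have := luckyL_formula 0
    rw [hR0, mul_zero] at this
    exact_mod_cast this
  · have := luckyL_formula 1
    rw [hR1, mul_zero] at this
    exact_mod_cast this
  · intro n hn
    obtain ⟨N, rfl⟩ : ∃ N, n = N + 2 := ⟨n - 2, by omega⟩
    have e1 : N + 2 - 1 = N + 1 := by omega
    have e2 : N + 2 - 2 = N := by omega
    rw [e1, e2]
    have hq : (luckyL (N + 2) : ℚ)
        = 2 * ((N : ℚ) + 2) * (luckyL (N + 1) : ℚ)
          - ((N : ℚ) + 2) * ((N : ℚ) + 1) * (luckyL N : ℚ)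
          + 2 * (Nat.factorial (N + 1) : ℚ) := by
      rw [luckyL_formula (N + 2), luckyL_formula (N + 1), luckyL_formula N]
      have hRa : Rsum (N + 2) = Rsum (N + 1) + Hsum (N + 2) := Rsum_succ (N + 1)
      have hRb : Rsum (N + 1) = Rsum N + Hsum (N + 1) := Rsum_succ N
      have hHa : Hsum (N + 2) = Hsum (N + 1) + 1 / ((N : ℚ) + 2) := Hsum_succ N
      have hf2 : (Nat.factorial (N + 2) : ℚ) = ((N : ℚ) + 2) * (Nat.factorial (N + 1) : ℚ) := by
        rw [Nat.factorial_succ]; push_cast; ring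
      have hf1 : (Nat.factorial (N + 1) : ℚ) = ((N : ℚ) + 1) * (Nat.factorial N : ℚ) := by
        rw [Nat.factorial_succ]; push_cast; ring
      rw [hRa, hHa, hRb, hf2, hf1]
      have hne : ((N : ℚ) + 2) ≠ 0 := by positivity
      field_simp
      ring
    qify
    linear_combination hq
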